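/- arXiv:1605.01860 — 2 statements merged into one kernel-verified Lean document; each statement's English description precedes it below -/
import Mathlib

section
/- Let φ be the convex piecewise linear function on M_ℝ = ℝⁿ given by the lower convex hull of {(m, φ̄(m)) : m ∈ ℤⁿ}, φ̄(y) = (1/2)yᵀZy, Z positive definite symmetric with integer entries. For m, m′ ∈ ℤⁿ, the subdifferentials satisfy ∂φ(m) = ∂φ(m′) + Z(m − m′, ·): translation by the linear functional Z(m−m′, ·) maps ∂φ(m′) bijectively onto ∂φ(m). Consequently Vol(∂φ(m)) is independent of m ∈ ℤⁿ. -/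
open Matrix MeasureTheory

/-! Quasi-periodicity says that translating `φ` by a lattice vector `γ` adds an affine function
with slope `Zγ`, and adding an affine function shifts every subgradient by its slope. The volume
statement is then translation invariance of Lebesgue measure. -/

def subdiff (n : ℕ) (f : (Fin n → ℝ) → ℝ) (y₀ : Fin n → ℝ) : Set (Fin n → ℝ) :=
  {v | ∀ y : Fin n → ℝ, v ⬝ᵥ (y - y₀) + f y₀ ≤ f y}

theorem add_mem_subdiff_add_iff {n : ℕ} {f : (Fin n → ℝ) → ℝ} {a c : Fin n → ℝ} {b : ℝ}
    (hf : ∀ y, f (y + c) = f y + (a ⬝ᵥ y + b)) (x v : Fin n → ℝ) :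
    v + a ∈ subdiff n f (x + c) ↔ v ∈ subdiff n f x := by
  refine ((Equiv.addRight c).forall_congr fun {y} => ?_).symm
  simp only [Equiv.coe_addRight, hf, add_sub_add_right_eq_sub, add_dotProduct, dotProduct_sub]
  constructor <;> intro h <;> linarith

theorem subdiff_add_eq_image {n : ℕ} {f : (Fin n → ℝ) → ℝ} {a c : Fin n → ℝ} {b : ℝ}
    (hf : ∀ y, f (y + c) = f y + (a ⬝ᵥ y + b)) (x : Fin n → ℝ) :
    subdiff n f (x + c) = (· + a) '' subdiff n f x := by
  ext w
  rw [Set.image_add_right, Set.mem_preimage, ← add_mem_subdiff_add_iff hf x (w + -a),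
    neg_add_cancel_right]

theorem Matrix.IsSymm.dotProduct_mulVec {ι R : Type*} [Fintype ι] [CommSemiring R]
    {Z : Matrix ι ι R} (hZ : Z.IsSymm) (u v : ι → R) : u ⬝ᵥ Z *ᵥ v = Z *ᵥ u ⬝ᵥ v := by
  rw [_root_.Matrix.dotProduct_mulVec, ← mulVec_transpose, hZ]

theorem stmt_12_general (n : ℕ) (Z : Matrix (Fin n) (Fin n) ℝ)
    (hsymm : Z.IsSymm)
    (φ : (Fin n → ℝ) → ℝ)
    (hper : ∀ (y : Fin n → ℝ) (γ : Fin n → ℤ),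
      φ (y + fun i => (γ i : ℝ)) =
        φ y + ((fun i => (γ i : ℝ)) ⬝ᵥ Z.mulVec y
          + (fun i => (γ i : ℝ)) ⬝ᵥ Z.mulVec (fun i => (γ i : ℝ)) / 2)) :
    ∀ m m' : Fin n → ℤ,
      subdiff n φ (fun i => (m i : ℝ))
        = (fun v => v + Z.mulVec (fun i => ((m i - m' i : ℤ) : ℝ))) ''
            subdiff n φ (fun i => (m' i : ℝ))
      ∧ volume (subdiff n φ (fun i => (m i : ℝ)))
          = volume (subdiff n φ (fun i => (m' i : ℝ))) := by
  intro m m'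
  set γ : Fin n → ℝ := fun i => ((m i - m' i : ℤ) : ℝ)
  have hm : (fun i => (m i : ℝ)) = (fun i => (m' i : ℝ)) + γ := by
    funext i; simp [γ]
  have hφ : ∀ y, φ (y + γ) = φ y + (Z *ᵥ γ ⬝ᵥ y + γ ⬝ᵥ Z *ᵥ γ / 2) := fun y => by
    rw [← hsymm.dotProduct_mulVec]
    exact hper y (m - m')
  have hshift := subdiff_add_eq_image hφ (fun i => (m' i : ℝ))
  rw [← hm] at hshift
  refine ⟨hshift, ?_⟩
  rw [hshift, Set.image_add_right, measure_preimage_add_right]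

/-- for `φ` convex with the quasi-periodicity
`φ(y+γ) = φ(y) + Z(γ,y) + Z(γ,γ)/2` (e.g. the lower convex hull of the lattice points on the
graph of `φ̄(y) = yᵀZy/2`, `Z` positive definite symmetric integral), the subdifferentials at
lattice points satisfy `∂φ(m) = ∂φ(m') + Z(m-m',·)`, and hence `Vol(∂φ(m))` is independent
of `m ∈ ℤⁿ`. -/
theorem stmt_12 (n : ℕ) (Z : Matrix (Fin n) (Fin n) ℝ)
    (hsymm : Z.IsSymm) (hpos : Z.PosDef)
    (hint : ∀ i j, ∃ z : ℤ, Z i j = (z : ℝ))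
    (φ : (Fin n → ℝ) → ℝ) (hconv : ConvexOn ℝ Set.univ φ)
    (hper : ∀ (y : Fin n → ℝ) (γ : Fin n → ℤ),
      φ (y + fun i => (γ i : ℝ)) =
        φ y + ((fun i => (γ i : ℝ)) ⬝ᵥ Z.mulVec y
          + (fun i => (γ i : ℝ)) ⬝ᵥ Z.mulVec (fun i => (γ i : ℝ)) / 2)) :
    ∀ m m' : Fin n → ℤ,
      subdiff n φ (fun i => (m i : ℝ))
        = (fun v => v + Z.mulVec (fun i => ((m i - m' i : ℤ) : ℝ))) ''
            subdiff n φ (fun i => (m' i : ℝ))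
      ∧ volume (subdiff n φ (fun i => (m i : ℝ)))
          = volume (subdiff n φ (fun i => (m' i : ℝ))) :=
  stmt_12_general n Z hsymm φ hper
end

section
/- With φ as above (lower convex hull of {(m, (1/2)mᵀZm)}) and k a positive integer, the common volume V = Vol(∂φ(m)) of the subdifferential at each lattice point satisfies kⁿ·V = Vol(D), where D is a fundamental domain for the lattice {Z(γ,·) : γ ∈ kℤⁿ} in (ℝⁿ)*, and Vol(D) = kⁿ det(Z). Hence V = det(Z), and MA(φ) = det(Z) Σ_{m ∈ ℤⁿ} δ_m. -/
/-!
At a lattice point `m` the envelope `φ` touches the paraboloid `yᵀZy/2`, and an affine function of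
slope `v` through that point stays below all lattice points exactly when `v - Zm` lies in the
Voronoi cell `P = {w | ⟪w, γ⟫ ≤ γᵀZγ/2 for all γ ∈ ℤⁿ}`; hence `∂φ(m) = Zm + P`. Minimising
`γᵀZγ/2 - ⟪v, γ⟫` over `γ ∈ ℤⁿ` shows that these translates cover `(ℝⁿ)*`, and two of them meet
only inside a hyperplane, so `P` is a fundamental domain of the lattice `Zℤⁿ` and has the volume
`det Z` of the parallelepiped spanned by the columns of `Z`. Finally a subgradient interior to
`∂φ(m)` supports `φ` at `m` only, so off the lattice `φ` contributes only subgradients lying on the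
null boundaries of the tiles.
-/

open Matrix MeasureTheory
open scoped ENNReal

/-- The fundamental parallelepiped `D` for the lattice generated by `kZe₁,…,kZeₙ`. -/
def fundDom (n k : ℕ) (Z : Matrix (Fin n) (Fin n) ℝ) : Set (Fin n → ℝ) :=
  (fun t : Fin n → ℝ => ∑ i, t i • ((k : ℝ) • Z.mulVec (Pi.single i 1))) ''
    Set.univ.pi fun _ => Set.Icc (0 : ℝ) 1

open Filter Set Submodule Topology
open scoped Pointwise

namespace LatticeHull

lemma mem_vadd_set_iff_sub_mem {G : Type*} [AddCommGroup G] {a v : G} {s : Set G} :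
    v ∈ a +ᵥ s ↔ v - a ∈ s := by
  rw [mem_vadd_set_iff_neg_vadd_mem, vadd_eq_add, neg_add_eq_sub]

lemma _root_.Matrix.PosSemidef.isSymm {ι : Type*} {Z : Matrix ι ι ℝ} (hZ : Z.PosSemidef) :
    Z.IsSymm :=
  isHermitian_iff_isSymm.mp hZ.isHermitian

section Lattice

variable {ι : Type*}

abbrev castVec : (ι → ℤ) →+ (ι → ℝ) := (Int.castAddHom ℝ).compLeft ι

lemma castVec_injective : Function.Injective (castVec (ι := ι)) :=
  Int.cast_injective.comp_left

variable [Fintype ι]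

lemma volume_setOf_dotProduct_eq {a : ι → ℝ} (ha : a ≠ 0) (c : ℝ) :
    volume {x : ι → ℝ | x ⬝ᵥ a = c} = 0 := by
  let H : AffineSubspace ℝ (ι → ℝ) :=
    (AffineSubspace.mk' c ⊥).comap ((dotProductBilin ℝ ℝ).flip a).toAffineMap
  have hH : (H : Set (ι → ℝ)) = {x | x ⬝ᵥ a = c} := by
    ext x
    simp [H, AffineSubspace.mem_mk', sub_eq_zero]
  rw [← hH]
  refine Measure.addHaar_affineSubspace _ H fun htop => ha ?_
  have h₀ : (0 : ι → ℝ) ∈ (H : Set (ι → ℝ)) := htop ▸ trivial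
  have h₁ : a ∈ (H : Set (ι → ℝ)) := htop ▸ trivial
  rw [hH, mem_ofPred_eq, zero_dotProduct] at h₀
  rw [hH, mem_ofPred_eq] at h₁
  exact dotProduct_self_eq_zero.mp (h₁.trans h₀.symm)

lemma add_dotProduct_mulVec_add {Z : Matrix ι ι ℝ} (hZ : Z.IsSymm) (x y : ι → ℝ) :
    (x + y) ⬝ᵥ Z *ᵥ (x + y) = x ⬝ᵥ Z *ᵥ x + 2 * (Z *ᵥ x ⬝ᵥ y) + y ⬝ᵥ Z *ᵥ y := by
  have h : x ⬝ᵥ Z *ᵥ y = Z *ᵥ x ⬝ᵥ y := by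
    rw [dotProduct_mulVec, ← mulVec_transpose, hZ.eq]
  rw [mulVec_add, add_dotProduct, dotProduct_add, dotProduct_add, h, dotProduct_comm y]
  ring

lemma exists_pos_mul_sq_norm_le {Z : Matrix ι ι ℝ} (hZ : Z.PosDef) :
    ∃ c > 0, ∀ x : ι → ℝ, c * ‖x‖ ^ 2 ≤ x ⬝ᵥ Z *ᵥ x := by
  obtain ⟨c, hc, hcZ⟩ := (isCompact_sphere (0 : ι → ℝ) 1).exists_forall_le' (a := 0)
    (f := fun x => x ⬝ᵥ Z *ᵥ x) (by fun_prop) fun u hu => by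
      simpa using hZ.dotProduct_mulVec_pos (ne_zero_of_mem_unit_sphere ⟨u, hu⟩)
  refine ⟨c, hc, fun x => ?_⟩
  rcases eq_or_ne x 0 with rfl | hx
  · simp
  have hx' : 0 < ‖x‖ := norm_pos_iff.mpr hx
  have hu := hcZ (‖x‖⁻¹ • x) (by simp [norm_smul, hx'.ne'])
  rw [mulVec_smul, dotProduct_smul, smul_dotProduct, smul_eq_mul, smul_eq_mul, ← mul_assoc,
    ← sq, inv_pow, inv_mul_eq_div, le_div_iff₀ (by positivity)] at hu
  exact hu

/-- The Voronoi cell at `0` of the lattice `Z ℤⁿ` for the inner product given by `Z⁻¹`. -/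
def voronoiCell (Z : Matrix ι ι ℝ) : Set (ι → ℝ) :=
  ⋂ γ : ι → ℤ, {w | w ⬝ᵥ castVec γ ≤ castVec γ ⬝ᵥ Z *ᵥ castVec γ / 2}

variable {Z : Matrix ι ι ℝ}

lemma mem_voronoiCell {w : ι → ℝ} :
    w ∈ voronoiCell Z ↔ ∀ γ : ι → ℤ, w ⬝ᵥ castVec γ ≤ castVec γ ⬝ᵥ Z *ᵥ castVec γ / 2 :=
  mem_iInter

lemma isClosed_voronoiCell : IsClosed (voronoiCell Z) :=
  isClosed_iInter fun _ => isClosed_le (by fun_prop) continuous_const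

lemma zero_mem_voronoiCell (hZ : Z.PosSemidef) : 0 ∈ voronoiCell Z :=
  mem_voronoiCell.mpr fun γ => by
    simpa using div_nonneg (hZ.dotProduct_mulVec_nonneg (castVec γ)) zero_le_two

lemma forall_le_iff_mem_voronoiCell (hZ : Z.IsSymm) (m : ι → ℤ) (w : ι → ℝ) :
    (∀ m' : ι → ℤ, (Z *ᵥ castVec m + w) ⬝ᵥ (castVec m' - castVec m)
        + castVec m ⬝ᵥ Z *ᵥ castVec m / 2 ≤ castVec m' ⬝ᵥ Z *ᵥ castVec m' / 2) ↔
      w ∈ voronoiCell Z := by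
  rw [mem_voronoiCell, ← (Equiv.addLeft m).forall_congr_right]
  refine forall_congr' fun γ => ?_
  rw [Equiv.coe_addLeft, map_add, add_sub_cancel_left, add_dotProduct_mulVec_add hZ,
    add_dotProduct]
  constructor <;> intro h <;> linarith

lemma sub_mulVec_mem_voronoiCell (hZ : Z.IsSymm) {v : ι → ℝ} {γ₀ : ι → ℤ}
    (hmin : ∀ γ, castVec γ₀ ⬝ᵥ Z *ᵥ castVec γ₀ / 2 - v ⬝ᵥ castVec γ₀
      ≤ castVec γ ⬝ᵥ Z *ᵥ castVec γ / 2 - v ⬝ᵥ castVec γ) :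
    v - Z *ᵥ castVec γ₀ ∈ voronoiCell Z := by
  refine mem_voronoiCell.mpr fun δ => ?_
  have h := hmin (γ₀ + δ)
  rw [map_add, add_dotProduct_mulVec_add hZ, dotProduct_add] at h
  rw [sub_dotProduct]
  linarith

lemma tendsto_quadratic_sub_linear_cofinite_atTop (hZ : Z.PosDef) (v : ι → ℝ) :
    Tendsto (fun γ : ι → ℤ => castVec γ ⬝ᵥ Z *ᵥ castVec γ / 2 - v ⬝ᵥ castVec γ)
      cofinite atTop := by
  obtain ⟨c, hc, hcZ⟩ := exists_pos_mul_sq_norm_le hZ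
  set C := ‖LinearMap.toContinuousLinearMap (dotProductBilin ℝ ℝ v)‖
  have hv (x : ι → ℝ) : v ⬝ᵥ x ≤ C * ‖x‖ :=
    (le_abs_self _).trans ((LinearMap.toContinuousLinearMap (dotProductBilin ℝ ℝ v)).le_opNorm x)
  have hnorm : Tendsto (fun γ : ι → ℤ => ‖γ‖) cofinite atTop := by
    rw [← cocompact_eq_cofinite]
    exact tendsto_norm_cocompact_atTop
  refine tendsto_atTop_mono (fun γ => ?_)
    (tendsto_atTop_add_const_right _ (-((C + 1) ^ 2 / (2 * c))) hnorm)
  have h₁ := hcZ (castVec γ)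
  have h₂ := hv (castVec γ)
  change ‖castVec γ‖ - _ ≤ _
  -- `c r² / 2 - (C + 1) r + (C + 1)² / 2c` is a square
  have key : (C + 1) * ‖castVec γ‖ ≤ c * ‖castVec γ‖ ^ 2 / 2 + (C + 1) ^ 2 / (2 * c) := by
    rw [div_add_div _ _ two_ne_zero (by positivity), le_div_iff₀ (by positivity)]
    nlinarith [sq_nonneg (c * ‖castVec γ‖ - (C + 1))]
  linarith

lemma exists_mem_vadd_voronoiCell (hZ : Z.PosDef) (v : ι → ℝ) :
    ∃ γ : ι → ℤ, v ∈ Z *ᵥ castVec γ +ᵥ voronoiCell Z := by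
  obtain ⟨γ, hγ⟩ := (tendsto_quadratic_sub_linear_cofinite_atTop hZ v).exists_forall_le
  exact ⟨γ, mem_vadd_set_iff_sub_mem.mpr (sub_mulVec_mem_voronoiCell hZ.posSemidef.isSymm hγ)⟩

lemma dotProduct_eq_of_mem_voronoiCell {w : ι → ℝ} {δ : ι → ℤ} (hw : w ∈ voronoiCell Z)
    (hw' : w - Z *ᵥ castVec δ ∈ voronoiCell Z) :
    w ⬝ᵥ castVec δ = castVec δ ⬝ᵥ Z *ᵥ castVec δ / 2 := by
  have h₁ := mem_voronoiCell.mp hw δ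
  have h₂ := mem_voronoiCell.mp hw' (-δ)
  simp only [map_neg, mulVec_neg, dotProduct_neg, neg_dotProduct, neg_neg, sub_dotProduct,
    dotProduct_comm (Z *ᵥ castVec δ)] at h₂
  linarith

lemma aedisjoint_vadd_voronoiCell {γ γ' : ι → ℤ} (h : γ ≠ γ') :
    AEDisjoint volume (Z *ᵥ castVec γ +ᵥ voronoiCell Z) (Z *ᵥ castVec γ' +ᵥ voronoiCell Z) := by
  set δ := γ - γ'
  have hδ : castVec δ ≠ 0 := (map_ne_zero_iff _ castVec_injective).mpr (sub_ne_zero.mpr h)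
  refine measure_mono_null (fun v hv => ?_) (volume_setOf_dotProduct_eq hδ
    (castVec δ ⬝ᵥ Z *ᵥ castVec δ / 2 + Z *ᵥ castVec γ' ⬝ᵥ castVec δ))
  rw [mem_inter_iff, mem_vadd_set_iff_sub_mem, mem_vadd_set_iff_sub_mem] at hv
  have hsub : v - Z *ᵥ castVec γ' - Z *ᵥ castVec δ = v - Z *ᵥ castVec γ := by
    rw [map_sub, mulVec_sub]
    abel
  have := dotProduct_eq_of_mem_voronoiCell hv.2 (hsub ▸ hv.1)
  rw [sub_dotProduct] at this
  exact eq_add_of_sub_eq this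

variable [DecidableEq ι]

noncomputable def columnBasis (hZ : IsUnit Z) : Module.Basis ι ℝ (ι → ℝ) :=
  (Pi.basisFun ℝ ι).map (Z.toLinearEquiv' hZ.invertible)

lemma columnBasis_apply (hZ : IsUnit Z) (i : ι) : columnBasis hZ i = Z.col i := by
  rw [columnBasis, Module.Basis.map_apply, Pi.basisFun_apply]
  exact mulVec_single_one Z i

lemma mem_span_columnBasis (hZ : IsUnit Z) {x : ι → ℝ} :
    x ∈ span ℤ (range (columnBasis hZ)) ↔ ∃ γ : ι → ℤ, Z *ᵥ castVec γ = x := by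
  have h (γ : ι → ℤ) : ∑ i, γ i • columnBasis hZ i = Z *ᵥ castVec γ := by
    simp only [columnBasis_apply, ← Int.cast_smul_eq_zsmul ℝ, mulVec_eq_sum, op_smul_eq_smul]
    rfl
  simp only [mem_span_range_iff_exists_fun, h]

lemma isAddFundamentalDomain_voronoiCell (hZ : Z.PosDef) :
    IsAddFundamentalDomain (span ℤ (range (columnBasis hZ.isUnit))).toAddSubgroup
      (voronoiCell Z) := by
  refine .mk'' isClosed_voronoiCell.measurableSet.nullMeasurableSet (.of_forall fun v => ?_)
    (fun g hg => ?_) fun g => (measurePreserving_vadd g volume).quasiMeasurePreserving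
  · obtain ⟨γ, hγ⟩ := exists_mem_vadd_voronoiCell hZ v
    refine ⟨⟨-(Z *ᵥ castVec γ), neg_mem ((mem_span_columnBasis _).mpr ⟨γ, rfl⟩)⟩, ?_⟩
    rw [mem_vadd_set_iff_sub_mem] at hγ
    simpa [neg_add_eq_sub] using hγ
  · obtain ⟨γ, hγ⟩ := (mem_span_columnBasis _).mp g.2
    have hγ0 : γ ≠ 0 := by
      rintro rfl
      exact hg (Subtype.ext (by simpa using hγ.symm))
    have := aedisjoint_vadd_voronoiCell (Z := Z) hγ0
    rwa [map_zero, mulVec_zero, zero_vadd, hγ] at this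

lemma volume_voronoiCell (hZ : Z.PosDef) : volume (voronoiCell Z) = ENNReal.ofReal Z.det := by
  have hcol : Matrix.of (columnBasis hZ.isUnit) = Zᵀ := by
    ext i j
    simp [columnBasis_apply]
  -- `Countable` is only registered for the submodule, not for its underlying subgroup
  have : Countable (span ℤ (range (columnBasis hZ.isUnit))).toAddSubgroup :=
    inferInstanceAs (Countable (span ℤ (range (columnBasis hZ.isUnit))))
  rw [(isAddFundamentalDomain_voronoiCell hZ).measure_eq
    (ZSpan.isAddFundamentalDomain' _ volume), ZSpan.volume_fundamentalDomain, hcol,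
    det_transpose, abs_of_pos hZ.det_pos]

end Lattice

section Subdifferential

variable {n : ℕ}

lemma subdiff_eq_iInter (f : (Fin n → ℝ) → ℝ) (x : Fin n → ℝ) :
    subdiff n f x = ⋂ y, {v | v ⬝ᵥ (y - x) ≤ f y - f x} := by
  ext v
  simp [subdiff, le_sub_iff_add_le]

lemma convex_subdiff (f : (Fin n → ℝ) → ℝ) (x : Fin n → ℝ) : Convex ℝ (subdiff n f x) := by
  rw [subdiff_eq_iInter]
  exact convex_iInter fun y => convex_halfSpace_le ((dotProductBilin ℝ ℝ).flip (y - x)).isLinear _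

lemma isClosed_subdiff (f : (Fin n → ℝ) → ℝ) (x : Fin n → ℝ) : IsClosed (subdiff n f x) := by
  rw [subdiff_eq_iInter]
  exact isClosed_iInter fun y => isClosed_le (by fun_prop) continuous_const

lemma eq_of_mem_subdiff_of_mem_interior {f : (Fin n → ℝ) → ℝ} {x y v : Fin n → ℝ}
    (hy : v ∈ subdiff n f y) (hx : v ∈ interior (subdiff n f x)) : y = x := by
  by_contra hne
  set d := y - x with hd
  have hdd : 0 < d ⬝ᵥ d := by
    have := dotProduct_self_star_pos_iff.mpr (sub_ne_zero.mpr hne)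
    rwa [star_trivial] at this
  -- `v + t d ∈ ∂f(x)` for small `t > 0`, and monotonicity of `∂f` then gives `t ‖d‖² ≤ 0`
  have hnear : ∀ᶠ t in 𝓝[>] (0 : ℝ), v + t • d ∈ subdiff n f x := by
    have hcont : Tendsto (fun t : ℝ => v + t • d) (𝓝 0) (𝓝 v) :=
      Continuous.tendsto' (by fun_prop) 0 v (by simp)
    exact nhdsWithin_le_nhds (hcont (mem_interior_iff_mem_nhds.mp hx))
  obtain ⟨t, ht, htpos⟩ := (hnear.and self_mem_nhdsWithin).exists
  have h₁ := ht y
  have h₂ := hy x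
  rw [← hd, add_dotProduct, smul_dotProduct, smul_eq_mul] at h₁
  rw [show x - y = -d by rw [hd, neg_sub], dotProduct_neg] at h₂
  nlinarith [mul_pos (show (0 : ℝ) < t from htpos) hdd]

/-- The Monge–Ampère measure of `f` is then `∑ₖ vol(∂f(p k)) δ_{p k}`. -/
lemma volume_biUnion_subdiff_eq_tsum {f : (Fin n → ℝ) → ℝ} {κ : Type*} [Countable κ]
    (p : κ → Fin n → ℝ) (hcover : ∀ v, ∃ k, v ∈ subdiff n f (p k))
    (hdisj : Pairwise fun k l => AEDisjoint volume (subdiff n f (p k)) (subdiff n f (p l)))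
    (E : Set (Fin n → ℝ)) :
    volume (⋃ y ∈ E, subdiff n f y)
      = ∑' k, E.indicator (fun y => volume (subdiff n f y)) (p k) := by
  set U := ⋃ k : ↥(p ⁻¹' E), subdiff n f (p k)
  have hU : volume U = ∑' k, E.indicator (fun y => volume (subdiff n f y)) (p k) := by
    rw [measure_iUnion₀ (hdisj.comp_of_injective Subtype.val_injective)
      fun k => (isClosed_subdiff f _).measurableSet.nullMeasurableSet,
      tsum_subtype (p ⁻¹' E) fun k => volume (subdiff n f (p k))]
    exact tsum_congr fun k => indicator_comp_right (g := fun y => volume (subdiff n f y)) p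
  have hUsub : U ⊆ ⋃ y ∈ E, subdiff n f y :=
    iUnion_subset fun k => subset_biUnion_of_mem (u := subdiff n f) k.2
  have hsub : (⋃ y ∈ E, subdiff n f y) \ U ⊆ ⋃ k, frontier (subdiff n f (p k)) := by
    simp only [sdiff_subset_iff, iUnion₂_subset_iff]
    intro y hy v hv
    obtain ⟨k, hk⟩ := hcover v
    by_cases hint : v ∈ interior (subdiff n f (p k))
    · obtain rfl := eq_of_mem_subdiff_of_mem_interior hv hint
      exact Or.inl (mem_iUnion.mpr ⟨⟨k, hy⟩, hk⟩)
    · refine Or.inr (mem_iUnion.mpr ⟨k, ?_⟩)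
      rw [(isClosed_subdiff f _).frontier_eq]
      exact ⟨hk, hint⟩
  have hnull : volume (⋃ k, frontier (subdiff n f (p k))) = 0 :=
    measure_iUnion_null fun k => (convex_subdiff f _).addHaar_frontier volume
  rw [← hU]
  exact le_antisymm (measure_mono_ae (ae_le_set.mpr (measure_mono_null hsub hnull)))
    (measure_mono hUsub)

end Subdifferential

section LowerHull

variable {n : ℕ}

def IsLowerLatticeHull (Z : Matrix (Fin n) (Fin n) ℝ) (φ : (Fin n → ℝ) → ℝ) : Prop :=
  ∀ y : Fin n → ℝ, IsLUB {r : ℝ | ∃ (v : Fin n → ℝ) (c : ℝ),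
    (∀ m : Fin n → ℤ, v ⬝ᵥ castVec m + c ≤ castVec m ⬝ᵥ Z *ᵥ castVec m / 2) ∧ r = v ⬝ᵥ y + c}
    (φ y)

variable {Z : Matrix (Fin n) (Fin n) ℝ} {φ : (Fin n → ℝ) → ℝ}

lemma IsLowerLatticeHull.apply_castVec (hφ : IsLowerLatticeHull Z φ) (hZ : Z.PosSemidef)
    (m : Fin n → ℤ) : φ (castVec m) = castVec m ⬝ᵥ Z *ᵥ castVec m / 2 := by
  refine le_antisymm ((hφ _).2 ?_) ((hφ _).1 ?_)
  · rintro r ⟨v, c, hvc, rfl⟩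
    exact hvc m
  · have htangent := (forall_le_iff_mem_voronoiCell hZ.isSymm m 0).mpr (zero_mem_voronoiCell hZ)
    refine ⟨Z *ᵥ castVec m, castVec m ⬝ᵥ Z *ᵥ castVec m / 2 - Z *ᵥ castVec m ⬝ᵥ castVec m,
      fun m' => ?_, by ring⟩
    have h := htangent m'
    rw [add_zero, dotProduct_sub] at h
    linarith

lemma IsLowerLatticeHull.subdiff_castVec (hφ : IsLowerLatticeHull Z φ) (hZ : Z.PosSemidef)
    (m : Fin n → ℤ) : subdiff n φ (castVec m) = Z *ᵥ castVec m +ᵥ voronoiCell Z := by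
  ext v
  rw [mem_vadd_set_iff_sub_mem, ← forall_le_iff_mem_voronoiCell hZ.isSymm m, add_sub_cancel,
    subdiff, mem_ofPred_eq, hφ.apply_castVec hZ]
  constructor
  · intro hv m'
    simpa only [hφ.apply_castVec hZ] using hv (castVec m')
  · intro hv y
    refine (hφ y).1 ⟨v, castVec m ⬝ᵥ Z *ᵥ castVec m / 2 - v ⬝ᵥ castVec m, fun m' => ?_, ?_⟩
    · have h := hv m'
      rw [dotProduct_sub] at h
      linarith
    · rw [dotProduct_sub]
      ring

lemma IsLowerLatticeHull.volume_subdiff_castVec (hφ : IsLowerLatticeHull Z φ) (hZ : Z.PosDef)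
    (m : Fin n → ℤ) : volume (subdiff n φ (castVec m)) = ENNReal.ofReal Z.det := by
  rw [hφ.subdiff_castVec hZ.posSemidef, measure_vadd, volume_voronoiCell hZ]

lemma IsLowerLatticeHull.volume_biUnion_subdiff (hφ : IsLowerLatticeHull Z φ) (hZ : Z.PosDef)
    (E : Set (Fin n → ℝ)) :
    volume (⋃ y ∈ E, subdiff n φ y)
      = ∑' m : Fin n → ℤ, E.indicator (fun _ => ENNReal.ofReal Z.det) (castVec m) := by
  rw [volume_biUnion_subdiff_eq_tsum castVec (fun v => ?_) fun γ γ' h => ?_]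
  · refine tsum_congr fun m => ?_
    by_cases hm : castVec m ∈ E <;> simp [hm, hφ.volume_subdiff_castVec hZ]
  · simpa only [hφ.subdiff_castVec hZ.posSemidef] using exists_mem_vadd_voronoiCell hZ v
  · simpa only [hφ.subdiff_castVec hZ.posSemidef] using aedisjoint_vadd_voronoiCell h

end LowerHull

lemma volume_fundDom {n : ℕ} (k : ℕ) {Z : Matrix (Fin n) (Fin n) ℝ} (hZ : 0 ≤ Z.det) :
    volume (fundDom n k Z) = ENNReal.ofReal ((k : ℝ) ^ n * Z.det) := by
  have hpar : fundDom n k Z = parallelepiped ((k : ℝ) • Z).col := by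
    simp only [fundDom, parallelepiped, pi_univ_Icc, mulVec_single_one]
    rfl
  have hvol : (Pi.basisFun ℝ (Fin n)).addHaar = volume := by
    rw [Module.Basis.addHaar_def, Module.Basis.parallelepiped_basisFun,
      addHaarMeasure_eq_volume_pi]
  rw [hpar, ← hvol, Measure.addHaar_parallelepiped, Pi.basisFun_det_apply,
    show Matrix.of ((k : ℝ) • Z).col = ((k : ℝ) • Z)ᵀ from rfl, det_transpose, det_smul,
    Fintype.card_fin, abs_of_nonneg (by positivity)]

end LatticeHull

open LatticeHull

theorem stmt_13_general (n : ℕ) (Z : Matrix (Fin n) (Fin n) ℝ)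
    (hpos : Z.PosDef)
    (φ : (Fin n → ℝ) → ℝ)
    (hφ : ∀ y : Fin n → ℝ, IsLUB
      {r : ℝ | ∃ (v : Fin n → ℝ) (c : ℝ),
        (∀ m : Fin n → ℤ, v ⬝ᵥ (fun i => (m i : ℝ)) + c ≤
          (fun i => (m i : ℝ)) ⬝ᵥ Z.mulVec (fun i => (m i : ℝ)) / 2)
        ∧ r = v ⬝ᵥ y + c} (φ y)) :
    (∀ (k : ℕ), 0 < k → ∀ m : Fin n → ℤ,
      (k : ℝ≥0∞) ^ n * volume (subdiff n φ (fun i => (m i : ℝ))) = volume (fundDom n k Z))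
    ∧ (∀ (k : ℕ), 0 < k →
      volume (fundDom n k Z) = ENNReal.ofReal ((k : ℝ) ^ n * Z.det))
    ∧ (∀ m : Fin n → ℤ,
      volume (subdiff n φ (fun i => (m i : ℝ))) = ENNReal.ofReal Z.det)
    ∧ (∀ E : Set (Fin n → ℝ), MeasurableSet E →
      volume (⋃ y ∈ E, subdiff n φ y)
        = ∑' m : Fin n → ℤ,
            E.indicator (fun _ => ENNReal.ofReal Z.det) (fun i => (m i : ℝ))) := by
  have hφ' : IsLowerLatticeHull Z φ := hφ
  have hV : ∀ m : Fin n → ℤ, volume (subdiff n φ fun i => (m i : ℝ)) = ENNReal.ofReal Z.det :=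
    hφ'.volume_subdiff_castVec hpos
  have hD (k : ℕ) := volume_fundDom (n := n) k hpos.det_pos.le
  refine ⟨fun k _ m => ?_, fun k _ => hD k, hV, fun E _ => hφ'.volume_biUnion_subdiff hpos E⟩
  rw [hV, hD, ENNReal.ofReal_mul (by positivity), ENNReal.ofReal_pow (Nat.cast_nonneg k),
    ENNReal.ofReal_natCast]

/-- with `φ` the lower convex hull of `{(m, mᵀZm/2) : m ∈ ℤⁿ}`, for any `k > 0`
the common volume `V = Vol(∂φ(m))` satisfies `kⁿ·V = Vol(D)` with `D` a fundamental domain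
for the lattice `{Z(γ,·) : γ ∈ kℤⁿ}`, `Vol(D) = kⁿ·det Z`, hence `V = det Z` and
`MA(φ) = det(Z)·Σ_{m∈ℤⁿ} δ_m`. -/
theorem stmt_13 (n : ℕ) (Z : Matrix (Fin n) (Fin n) ℝ)
    (hsymm : Z.IsSymm) (hpos : Z.PosDef)
    (hint : ∀ i j, ∃ z : ℤ, Z i j = (z : ℝ))
    (φ : (Fin n → ℝ) → ℝ)
    (hφ : ∀ y : Fin n → ℝ, IsLUB
      {r : ℝ | ∃ (v : Fin n → ℝ) (c : ℝ),
        (∀ m : Fin n → ℤ, v ⬝ᵥ (fun i => (m i : ℝ)) + c ≤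
          (fun i => (m i : ℝ)) ⬝ᵥ Z.mulVec (fun i => (m i : ℝ)) / 2)
        ∧ r = v ⬝ᵥ y + c} (φ y)) :
    (∀ (k : ℕ), 0 < k → ∀ m : Fin n → ℤ,
      (k : ℝ≥0∞) ^ n * volume (subdiff n φ (fun i => (m i : ℝ))) = volume (fundDom n k Z))
    ∧ (∀ (k : ℕ), 0 < k →
      volume (fundDom n k Z) = ENNReal.ofReal ((k : ℝ) ^ n * Z.det))
    ∧ (∀ m : Fin n → ℤ,
      volume (subdiff n φ (fun i => (m i : ℝ))) = ENNReal.ofReal Z.det)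
    ∧ (∀ E : Set (Fin n → ℝ), MeasurableSet E →
      volume (⋃ y ∈ E, subdiff n φ y)
        = ∑' m : Fin n → ℤ,
            E.indicator (fun _ => ENNReal.ofReal Z.det) (fun i => (m i : ℝ))) :=
  stmt_13_general n Z hpos φ hφ
end
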